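/- Let C be a closed, convex, unbounded set in a real Hilbert space H, and suppose there exist α, β > 0 and a subspace F ⊂ H such that α·B_F ⊆ C ⊆ D_F(α,β), where B_F is the closed unit ball of F and D_F(α,β) = { x ∈ H : ‖π_{F⊥}(x)‖ − β ≤ α⁻¹β‖π_F(x)‖ }. For λ, t > 0 define E_F(λ,t) = { x ∈ t·S_F : ‖π_C(x)‖ ≥ λ }, where S_F is the unit sphere of F and π_C is the nearest point projection onto C. Then for every λ > 0 there exist t ≥ λ and real numbers r, r' > 0 with r' > r such that r'·B_H ∩ C ⊆ E_F(λ,t) + r·B_H. -/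

import Mathlib

/-! Take `t = λ (1 + 4 k²)` with `k = β / α`, and `s = t + α + 2λ`. If `x ∈ C` has
`‖π_F x‖ ≥ s`, let `u` be the direction of `π_F x` and `p = π_C (t u)`. Testing the variational
inequality of `p` at the two points `α u` and `x = ‖π_F x‖ u + π_{F⊥} x` of `C`, where
`‖π_{F⊥} x‖ ≤ β + k ‖π_F x‖` because `C ⊆ D_F(α,β)`, forces `⟪u, p⟫ ≥ λ`; so `t u ∈ E_F(λ,t)`.
Such an `x` exists because `C` is unbounded, which gives a point `e₀ ∈ E_F(λ,t)`.
Now let `x ∈ C` with `‖x‖ ≤ r' = √(r² + t s)`. If `‖π_F x‖ ≥ s`, then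
`‖x - t u‖² = ‖x‖² - 2 t ‖π_F x‖ + t² ≤ r²`; otherwise `‖x‖ ≤ s + β + k s`, so `x` lies within
`r = s + β + k s + t` of `e₀`. -/

open Bornology Metric Pointwise

variable {H : Type*} [NormedAddCommGroup H] [InnerProductSpace ℝ H]

/-- `D_F(α,β) = { x ∈ H : ‖π_{F⊥}(x)‖ − β ≤ α⁻¹β‖π_F(x)‖ }`. -/
noncomputable def DSet [CompleteSpace H] (F : Submodule ℝ H) [Submodule.HasOrthogonalProjection F]
    (α β : ℝ) : Set H :=
  {x : H | ‖(Fᗮ.orthogonalProjectionOnto x : H)‖ - β ≤ α⁻¹ * β * ‖(F.orthogonalProjectionOnto x : H)‖}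

open RealInnerProductSpace

-- With `c = ⟪u, p⟫` and `q = ‖p - c u‖`, `h₁` and `h₂` are the variational inequalities of
-- `p = π_C (t u)` tested at `α u` and at `A u + b`, where `b ⟂ u` and `B = ‖b‖`.
lemma le_of_variational_inequalities {t c α A lam k q B : ℝ} (hα : 0 ≤ α) (hlam : 0 ≤ lam)
    (hB : 0 ≤ B) (hBA : B ≤ k * (α + A)) (ht : lam * (1 + 4 * k ^ 2) ≤ t)
    (hA : α + 2 * lam ≤ A) (h₁ : (t - c) * (α - c) + q ^ 2 ≤ 0)
    (h₂ : (t - c) * (A - c) + q ^ 2 ≤ q * B) : lam ≤ c := by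
  by_contra! hc
  have htc : 0 < t - c := by nlinarith [sq_nonneg k]
  have hAc : 0 < A - c := by linarith
  have hq₂ : q ^ 2 ≤ (t - c) * (c - α) := by linarith
  have h₃ : ((t - c) * (A - c)) ^ 2 ≤ (t - c) * ((c - α) * B ^ 2) := calc
    ((t - c) * (A - c)) ^ 2 ≤ (q * B) ^ 2 :=
      pow_le_pow_left₀ (by positivity) (by nlinarith) 2
    _ = q ^ 2 * B ^ 2 := mul_pow q B 2
    _ ≤ (t - c) * ((c - α) * B ^ 2) := by nlinarith [sq_nonneg B]
  have h₄ : (t - c) * (A - c) ^ 2 ≤ (c - α) * B ^ 2 :=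
    le_of_mul_le_mul_left (by nlinarith) htc
  -- `B` grows at most like `2 k (A - c)`, and the factor `4 k ^ 2` in `t` is chosen to beat it.
  have h₅ : (c - α) * B ^ 2 ≤ lam * (4 * k ^ 2) * (A - c) ^ 2 := calc
    (c - α) * B ^ 2 ≤ lam * (k * (α + A)) ^ 2 :=
      mul_le_mul (by linarith) (pow_le_pow_left₀ hB hBA 2) (sq_nonneg B) hlam
    _ = lam * k ^ 2 * (α + A) ^ 2 := by ring
    _ ≤ lam * k ^ 2 * (2 * (A - c)) ^ 2 := by
      gcongr
      · linarith
      · linarith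
    _ = lam * (4 * k ^ 2) * (A - c) ^ 2 := by ring
  nlinarith [sq_pos_of_pos hAc]

lemma inner_smul_sub_smul_sub {u : H} (hu : ‖u‖ = 1) (p : H) (t a : ℝ) :
    ⟪t • u - p, a • u - p⟫ = (t - ⟪u, p⟫) * (a - ⟪u, p⟫) + ‖p - ⟪u, p⟫ • u‖ ^ 2 := by
  rw [norm_sub_sq_real, norm_smul, hu, mul_one, Real.norm_eq_abs, sq_abs]
  simp only [inner_sub_left, inner_sub_right, real_inner_smul_left, real_inner_smul_right,
    real_inner_self_eq_norm_sq, hu, real_inner_comm p u]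
  ring

lemma le_norm_of_variational_inequalities {u b p : H} {t α A lam k : ℝ} (hu : ‖u‖ = 1)
    (hub : ⟪u, b⟫ = 0) (hα : 0 ≤ α) (hlam : 0 ≤ lam) (hb : ‖b‖ ≤ k * (α + A))
    (ht : lam * (1 + 4 * k ^ 2) ≤ t) (hA : α + 2 * lam ≤ A)
    (h₁ : ⟪t • u - p, α • u - p⟫ ≤ 0) (h₂ : ⟪t • u - p, A • u + b - p⟫ ≤ 0) : lam ≤ ‖p‖ := by
  set w := p - ⟪u, p⟫ • u
  have hpb : ⟪p, b⟫ ≤ ‖w‖ * ‖b‖ := calc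
    ⟪p, b⟫ = ⟪w, b⟫ := by rw [inner_sub_left, real_inner_smul_left, hub, mul_zero, sub_zero]
    _ ≤ ‖w‖ * ‖b‖ := real_inner_le_norm w b
  have h₂' : ⟪t • u - p, A • u + b - p⟫ = ⟪t • u - p, A • u - p⟫ - ⟪p, b⟫ := by
    rw [add_sub_right_comm, inner_add_right, inner_sub_left (t • u) p b, real_inner_smul_left, hub,
      mul_zero, zero_sub, ← sub_eq_add_neg]
  rw [inner_smul_sub_smul_sub hu] at h₁
  rw [h₂', inner_smul_sub_smul_sub hu] at h₂
  refine (le_of_variational_inequalities hα hlam (norm_nonneg b) hb ht hA h₁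
    (by linarith)).trans ?_
  simpa [hu] using real_inner_le_norm u p

lemma inner_sub_le_zero_of_forall_dist_le {C : Set H} (hC : Convex ℝ C) {e p : H} (hp : p ∈ C)
    (hmin : ∀ y ∈ C, dist e p ≤ dist e y) {w : H} (hw : w ∈ C) : ⟪e - p, w - p⟫ ≤ 0 := by
  have : Nonempty C := ⟨⟨p, hp⟩⟩
  refine (norm_eq_iInf_iff_real_inner_le_zero hC hp).mp (le_antisymm (le_ciInf fun y => ?_) ?_) w hw
  · simpa only [dist_eq_norm] using hmin y y.2
  · have hbdd : BddBelow (Set.range fun y : C => ‖e - y‖) :=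
      ⟨0, Set.forall_mem_range.2 fun _ => norm_nonneg _⟩
    exact ciInf_le hbdd ⟨p, hp⟩

section Projections

variable {F : Submodule ℝ H} [F.HasOrthogonalProjection]

lemma norm_smul_starProjection {x : H} (hx : F.starProjection x ≠ 0) {t : ℝ} (ht : 0 ≤ t) :
    ‖(t / ‖F.starProjection x‖) • F.starProjection x‖ = t := by
  rw [norm_smul, Real.norm_eq_abs, abs_div, abs_norm, abs_of_nonneg ht,
    div_mul_cancel₀ _ (norm_ne_zero_iff.mpr hx)]

lemma norm_sub_smul_starProjection_sq {x : H} (hx : F.starProjection x ≠ 0) (t : ℝ) :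
    ‖x - (t / ‖F.starProjection x‖) • F.starProjection x‖ ^ 2 =
      ‖x‖ ^ 2 - 2 * t * ‖F.starProjection x‖ + t ^ 2 := by
  have hinner : ⟪x, F.starProjection x⟫ = ‖F.starProjection x‖ ^ 2 := by
    have := F.starProjection_inner_eq_zero x _ (F.starProjection_apply_mem x)
    rwa [inner_sub_left, real_inner_self_eq_norm_sq, sub_eq_zero] at this
  have hne : ‖F.starProjection x‖ ≠ 0 := norm_ne_zero_iff.mpr hx
  rw [norm_sub_sq_real, real_inner_smul_right, hinner, norm_smul, Real.norm_eq_abs, abs_div,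
    abs_norm, div_mul_cancel₀ _ hne, sq_abs]
  field_simp

lemma norm_starProjection_orthogonal_le [CompleteSpace H] {α β : ℝ} {x : H}
    (hx : x ∈ DSet F α β) : ‖Fᗮ.starProjection x‖ ≤ β + α⁻¹ * β * ‖F.starProjection x‖ := by
  simp only [DSet, Set.mem_ofPred_eq, Submodule.coe_orthogonalProjectionOnto_apply] at hx
  linarith

lemma exists_mem_le_norm_starProjection [CompleteSpace H] {C : Set H} (hC : ¬IsBounded C)
    {α β : ℝ} (hD : C ⊆ DSet F α β) (hk : 0 ≤ α⁻¹ * β) (s : ℝ) :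
    ∃ x ∈ C, s ≤ ‖F.starProjection x‖ := by
  by_contra! h
  refine hC (isBounded_iff_forall_norm_le.2 ⟨β + (1 + α⁻¹ * β) * s, fun x hx => ?_⟩)
  have hb := norm_starProjection_orthogonal_le (hD hx)
  calc ‖x‖ = ‖F.starProjection x + Fᗮ.starProjection x‖ := by
        rw [F.starProjection_add_starProjection_orthogonal]
    _ ≤ ‖F.starProjection x‖ + ‖Fᗮ.starProjection x‖ := norm_add_le _ _
    _ ≤ β + (1 + α⁻¹ * β) * s := by nlinarith [h x hx]

lemma smul_starProjection_mem_of_le_norm [CompleteSpace H] {C : Set H} (hC : Convex ℝ C)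
    {α β : ℝ} (hα : 0 < α) (hball : {y : H | y ∈ F ∧ ‖y‖ ≤ α} ⊆ C) (hD : C ⊆ DSet F α β)
    {πC : H → H} (hπCmem : ∀ x, πC x ∈ C) (hπCproj : ∀ x, ∀ y ∈ C, dist x (πC x) ≤ dist x y)
    {lam t : ℝ} (hlam : 0 ≤ lam) (ht : lam * (1 + 4 * (α⁻¹ * β) ^ 2) ≤ t) {x : H} (hx : x ∈ C)
    (hA : α + 2 * lam ≤ ‖F.starProjection x‖) :
    (t / ‖F.starProjection x‖) • F.starProjection x ∈
      {z : H | z ∈ F ∧ ‖z‖ = t ∧ lam ≤ ‖πC z‖} := by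
  set a := F.starProjection x
  set b := Fᗮ.starProjection x
  have ha : 0 < ‖a‖ := by linarith
  set u := ‖a‖⁻¹ • a
  have hu : ‖u‖ = 1 := norm_smul_inv_norm (norm_pos_iff.mp ha)
  have huF : u ∈ F := F.smul_mem _ (F.starProjection_apply_mem x)
  have hub : ⟪u, b⟫ = 0 :=
    Submodule.inner_right_of_mem_orthogonal huF (Fᗮ.starProjection_apply_mem x)
  have hxu : x = ‖a‖ • u + b := by
    rw [smul_smul, mul_inv_cancel₀ ha.ne', one_smul, F.starProjection_add_starProjection_orthogonal]
  have hb : ‖b‖ ≤ α⁻¹ * β * (α + ‖a‖) := by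
    have := norm_starProjection_orthogonal_le (hD hx)
    rwa [mul_add, mul_right_comm, inv_mul_cancel₀ hα.ne', one_mul]
  have hαu : α • u ∈ C :=
    hball ⟨F.smul_mem _ huF, by rw [norm_smul, hu, mul_one, Real.norm_of_nonneg hα.le]⟩
  have hvar := fun w (hw : w ∈ C) =>
    inner_sub_le_zero_of_forall_dist_le hC (hπCmem (t • u)) (hπCproj (t • u)) hw
  have htu : (t / ‖a‖) • a = t • u := by rw [smul_smul, div_eq_mul_inv]
  refine ⟨F.smul_mem _ (F.starProjection_apply_mem x),
    norm_smul_starProjection (norm_pos_iff.mp ha) (by nlinarith [sq_nonneg (α⁻¹ * β)]), ?_⟩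
  rw [htu]
  exact le_norm_of_variational_inequalities hu hub hα.le hlam hb ht hA (hvar _ hαu)
    (hxu ▸ hvar _ hx)

lemma closedBall_inter_subset_add_closedBall {C E : Set H} {e₀ : H} {t s β k r : ℝ} (ht : 0 < t)
    (hts : t ≤ s) (hβ : 0 ≤ β) (hk : 0 ≤ k) (hr : s + β + k * s + t ≤ r)
    (hb : ∀ x ∈ C, ‖Fᗮ.starProjection x‖ ≤ β + k * ‖F.starProjection x‖)
    (hE : ∀ e ∈ E, ‖e‖ = t) (he₀ : e₀ ∈ E)
    (hrad : ∀ x ∈ C, s ≤ ‖F.starProjection x‖ →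
      (t / ‖F.starProjection x‖) • F.starProjection x ∈ E) :
    closedBall 0 √(r ^ 2 + t * s) ∩ C ⊆ E + closedBall 0 r := by
  rintro x ⟨hxr, hxC⟩
  rw [mem_closedBall_zero_iff] at hxr
  have hr0 : 0 ≤ r := by nlinarith
  by_cases hs : s ≤ ‖F.starProjection x‖
  · refine ⟨_, hrad x hxC hs, x - _, mem_closedBall_zero_iff.2 ?_, add_sub_cancel _ _⟩
    have hx0 : F.starProjection x ≠ 0 := norm_pos_iff.mp (by linarith)
    have hx2 : ‖x‖ ^ 2 ≤ r ^ 2 + t * s := (Real.le_sqrt (norm_nonneg x) (by nlinarith)).1 hxr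
    refine (pow_le_pow_iff_left₀ (norm_nonneg _) hr0 two_ne_zero).1 ?_
    rw [norm_sub_smul_starProjection_sq hx0]
    nlinarith
  · refine ⟨e₀, he₀, x - e₀, mem_closedBall_zero_iff.2 ?_, add_sub_cancel _ _⟩
    have hbx := hb x hxC
    calc ‖x - e₀‖ ≤ ‖x‖ + ‖e₀‖ := norm_sub_le _ _
      _ = ‖F.starProjection x + Fᗮ.starProjection x‖ + t := by
        rw [F.starProjection_add_starProjection_orthogonal, hE e₀ he₀]
      _ ≤ ‖F.starProjection x‖ + ‖Fᗮ.starProjection x‖ + t := by gcongr; exact norm_add_le _ _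
      _ ≤ r := by nlinarith

end Projections

theorem exists_sphere_net_cover_general [CompleteSpace H] (C : Set H)
    (hCconv : Convex ℝ C) (hCub : ¬ IsBounded C)
    (F : Submodule ℝ H) [Submodule.HasOrthogonalProjection F] (α β : ℝ) (hα : 0 < α) (hβ : 0 < β)
    (hball : {y : H | y ∈ F ∧ ‖y‖ ≤ α} ⊆ C) (hD : C ⊆ DSet F α β)
    (πC : H → H) (hπCmem : ∀ x : H, πC x ∈ C)
    (hπCproj : ∀ x : H, ∀ y ∈ C, dist x (πC x) ≤ dist x y)
    (lam : ℝ) (hlam : 0 < lam) :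
    ∃ t : ℝ, lam ≤ t ∧ ∃ r r' : ℝ, 0 < r ∧ r < r' ∧
      closedBall (0 : H) r' ∩ C ⊆
        {x : H | x ∈ F ∧ ‖x‖ = t ∧ lam ≤ ‖πC x‖} + closedBall (0 : H) r := by
  have hk : 0 ≤ α⁻¹ * β := by positivity
  set t := lam * (1 + 4 * (α⁻¹ * β) ^ 2)
  have hlamt : lam ≤ t := le_mul_of_one_le_right hlam.le (by nlinarith)
  set s := t + α + 2 * lam
  set r := s + β + α⁻¹ * β * s + t
  have hr : 0 < r := by positivity
  obtain ⟨x₀, hx₀, hs₀⟩ := exists_mem_le_norm_starProjection hCub hD hk s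
  have hrad : ∀ x ∈ C, s ≤ ‖F.starProjection x‖ →
      (t / ‖F.starProjection x‖) • F.starProjection x ∈
        {z : H | z ∈ F ∧ ‖z‖ = t ∧ lam ≤ ‖πC z‖} := fun x hx hs =>
    smul_starProjection_mem_of_le_norm hCconv hα hball hD hπCmem hπCproj hlam.le le_rfl hx
      (by linarith)
  refine ⟨t, hlamt, r, √(r ^ 2 + t * s), hr, (Real.lt_sqrt hr.le).2 (by nlinarith), ?_⟩
  exact closedBall_inter_subset_add_closedBall (by linarith) (by linarith) hβ.le hk le_rfl
    (fun x hx => norm_starProjection_orthogonal_le (hD hx)) (fun _ he => he.2.1)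
    (hrad x₀ hx₀ hs₀) hrad

/-- Let `C` be closed, convex and unbounded with `α·B_F ⊆ C ⊆ D_F(α,β)` for a subspace
`F ⊂ H` and `α, β > 0`. For `λ, t > 0` let `E_F(λ,t) = { x ∈ t·S_F : ‖π_C(x)‖ ≥ λ }`,
where `π_C` is the nearest point projection onto `C`. Then for every `λ > 0` there are
`t ≥ λ` and `r, r' > 0` with `r' > r` such that `r'·B_H ∩ C ⊆ E_F(λ,t) + r·B_H`. -/
theorem exists_sphere_net_cover [CompleteSpace H] (C : Set H) (hCcl : IsClosed C)
    (hCconv : Convex ℝ C) (hCub : ¬ IsBounded C)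
    (F : Submodule ℝ H) [Submodule.HasOrthogonalProjection F] (α β : ℝ) (hα : 0 < α) (hβ : 0 < β)
    (hball : {y : H | y ∈ F ∧ ‖y‖ ≤ α} ⊆ C) (hD : C ⊆ DSet F α β)
    (πC : H → H) (hπCmem : ∀ x : H, πC x ∈ C)
    (hπCproj : ∀ x : H, ∀ y ∈ C, dist x (πC x) ≤ dist x y)
    (lam : ℝ) (hlam : 0 < lam) :
    ∃ t : ℝ, lam ≤ t ∧ ∃ r r' : ℝ, 0 < r ∧ r < r' ∧
      closedBall (0 : H) r' ∩ C ⊆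
        {x : H | x ∈ F ∧ ‖x‖ = t ∧ lam ≤ ‖πC x‖} + closedBall (0 : H) r :=
  exists_sphere_net_cover_general C hCconv hCub F α β hα hβ hball hD πC hπCmem hπCproj lam hlam
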